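/- arXiv:1010.5011 — 3 statements merged into one kernel-verified Lean document; each statement's English description precedes it below -/
import Mathlib

section
/- Let N, M ≥ 1. (a) If h₁ and h₂ are height functions on the N×M grid, then the pointwise maximum (i,j) ↦ max(h₁(i,j), h₂(i,j)) and the pointwise minimum (i,j) ↦ min(h₁(i,j), h₂(i,j)) are again height functions. (b) Consequently, for any prescribed boundary value, if the set of height functions on the N×M grid with that boundary value is nonempty, then it contains a least element h_min and a greatest element h_max with respect to the pointwise order: h_min(i,j) ≤ h(i,j) ≤ h_max(i,j) for every height function h with that boundary value and every face (i,j). -/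
/-- A height function on the `N × M` grid: an integer-valued function on the
faces `(i,j)`, `0 ≤ i ≤ N`, `0 ≤ j ≤ M`, whose increments in the `x` and `y`
directions lie in `{0,1}`. -/
def IsHeightFn (N M : ℕ) (h : ℕ → ℕ → ℤ) : Prop :=
  (∀ i j, i < N → j ≤ M → (h (i + 1) j - h i j = 0 ∨ h (i + 1) j - h i j = 1)) ∧
  (∀ i j, i ≤ N → j < M → (h i (j + 1) - h i j = 0 ∨ h i (j + 1) - h i j = 1))

/-- `h` has boundary value `b`: `h` agrees with `b` on the faces `(i,j)` with
`i ∈ {0,N}` or `j ∈ {0,M}`. -/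
def HasBoundaryValue (N M : ℕ) (h b : ℕ → ℕ → ℤ) : Prop :=
  ∀ i j, i ≤ N → j ≤ M → (i = 0 ∨ i = N ∨ j = 0 ∨ j = M) → h i j = b i j

/-- Bounds on a height function in terms of its value at the origin. -/
lemma heightFn_bounds {N M : ℕ} {h : ℕ → ℕ → ℤ} (hH : IsHeightFn N M h) :
    ∀ i, i ≤ N → ∀ j, j ≤ M → h 0 0 ≤ h i j ∧ h i j ≤ h 0 0 + i + j := by
  intro i
  induction i with
  | zero =>
    intro _ j
    induction j with
    | zero => simp
    | succ j ihj =>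
      intro hj
      have s := hH.2 0 j (by omega) (by omega)
      have t := ihj (by omega)
      push_cast at t ⊢
      omega
  | succ i ihi =>
    intro hi j hj
    have s := hH.1 i j (by omega) hj
    have t := ihi (by omega) j hj
    push_cast at t ⊢
    omega

/-- (a) pointwise max and min of two height functions are height
functions; (b) a nonempty set of height functions with a prescribed boundary
value contains a least and a greatest element for the pointwise order. -/
theorem stmt_1 (N M : ℕ) (hN : 1 ≤ N) (hM : 1 ≤ M) :
    (∀ h₁ h₂ : ℕ → ℕ → ℤ, IsHeightFn N M h₁ → IsHeightFn N M h₂ →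
        IsHeightFn N M (fun i j => max (h₁ i j) (h₂ i j)) ∧
        IsHeightFn N M (fun i j => min (h₁ i j) (h₂ i j))) ∧
    (∀ b : ℕ → ℕ → ℤ,
      (∃ h, IsHeightFn N M h ∧ HasBoundaryValue N M h b) →
      ∃ hmin hmax : ℕ → ℕ → ℤ,
        IsHeightFn N M hmin ∧ HasBoundaryValue N M hmin b ∧
        IsHeightFn N M hmax ∧ HasBoundaryValue N M hmax b ∧
        ∀ h, IsHeightFn N M h → HasBoundaryValue N M h b →
          ∀ i j, i ≤ N → j ≤ M → hmin i j ≤ h i j ∧ h i j ≤ hmax i j) := by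
  constructor
  · intro h₁ h₂ H1 H2
    refine ⟨⟨?_, ?_⟩, ?_, ?_⟩
    · intro i j hi hj
      have a := H1.1 i j hi hj; have c := H2.1 i j hi hj
      simp only; omega
    · intro i j hi hj
      have a := H1.2 i j hi hj; have c := H2.2 i j hi hj
      simp only; omega
    · intro i j hi hj
      have a := H1.1 i j hi hj; have c := H2.1 i j hi hj
      simp only; omega
    · intro i j hi hj
      have a := H1.2 i j hi hj; have c := H2.2 i j hi hj
      simp only; omega
  · rintro b ⟨h0, h0H, h0B⟩
    set T : ℕ → ℕ → Set ℤ :=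
      fun i j => {x | ∃ h, (IsHeightFn N M h ∧ HasBoundaryValue N M h b) ∧ h i j = x}
      with hT
    have hne : ∀ i j, (T i j).Nonempty := fun i j => ⟨h0 i j, h0, ⟨h0H, h0B⟩, rfl⟩
    have hbdd : ∀ i j, i ≤ N → j ≤ M → BddAbove (T i j) := by
      intro i j hi hj
      refine ⟨b 0 0 + i + j, ?_⟩
      rintro x ⟨h, ⟨hH, hB⟩, rfl⟩
      have := (heightFn_bounds hH i hi j hj).2
      have h00 : h 0 0 = b 0 0 := hB 0 0 (by omega) (by omega) (Or.inl rfl)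
      omega
    have hbddb : ∀ i j, i ≤ N → j ≤ M → BddBelow (T i j) := by
      intro i j hi hj
      refine ⟨b 0 0, ?_⟩
      rintro x ⟨h, ⟨hH, hB⟩, rfl⟩
      have := (heightFn_bounds hH i hi j hj).1
      have h00 : h 0 0 = b 0 0 := hB 0 0 (by omega) (by omega) (Or.inl rfl)
      omega
    refine ⟨fun i j => sInf (T i j), fun i j => sSup (T i j), ?_, ?_, ?_, ?_, ?_⟩
    · -- hmin is a height function
      constructor
      · intro i j hi hj
        obtain ⟨h1, ⟨h1H, h1B⟩, e1⟩ := Int.csInf_mem (hne i j) (hbddb i j (by omega) hj)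
        obtain ⟨h2, ⟨h2H, h2B⟩, e2⟩ :=
          Int.csInf_mem (hne (i+1) j) (hbddb (i+1) j (by omega) hj)
        have l1 : sInf (T (i+1) j) ≤ h1 (i+1) j :=
          csInf_le (hbddb (i+1) j (by omega) hj) ⟨h1, ⟨h1H, h1B⟩, rfl⟩
        have l2 : sInf (T i j) ≤ h2 i j :=
          csInf_le (hbddb i j (by omega) hj) ⟨h2, ⟨h2H, h2B⟩, rfl⟩
        have s1 := h1H.1 i j hi hj
        have s2 := h2H.1 i j hi hj
        beta_reduce; omega
      · intro i j hi hj
        obtain ⟨h1, ⟨h1H, h1B⟩, e1⟩ := Int.csInf_mem (hne i j) (hbddb i j hi (by omega))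
        obtain ⟨h2, ⟨h2H, h2B⟩, e2⟩ :=
          Int.csInf_mem (hne i (j+1)) (hbddb i (j+1) hi (by omega))
        have l1 : sInf (T i (j+1)) ≤ h1 i (j+1) :=
          csInf_le (hbddb i (j+1) hi (by omega)) ⟨h1, ⟨h1H, h1B⟩, rfl⟩
        have l2 : sInf (T i j) ≤ h2 i j :=
          csInf_le (hbddb i j hi (by omega)) ⟨h2, ⟨h2H, h2B⟩, rfl⟩
        have s1 := h1H.2 i j hi hj
        have s2 := h2H.2 i j hi hj
        beta_reduce; omega
    · -- hmin boundary
      intro i j hi hj hbnd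
      obtain ⟨h1, ⟨h1H, h1B⟩, e1⟩ := Int.csInf_mem (hne i j) (hbddb i j hi hj)
      beta_reduce; rw [← e1]; exact h1B i j hi hj hbnd
    · -- hmax is a height function
      constructor
      · intro i j hi hj
        obtain ⟨h1, ⟨h1H, h1B⟩, e1⟩ := Int.csSup_mem (hne i j) (hbdd i j (by omega) hj)
        obtain ⟨h2, ⟨h2H, h2B⟩, e2⟩ :=
          Int.csSup_mem (hne (i+1) j) (hbdd (i+1) j (by omega) hj)
        have l1 : h1 (i+1) j ≤ sSup (T (i+1) j) :=
          le_csSup (hbdd (i+1) j (by omega) hj) ⟨h1, ⟨h1H, h1B⟩, rfl⟩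
        have l2 : h2 i j ≤ sSup (T i j) :=
          le_csSup (hbdd i j (by omega) hj) ⟨h2, ⟨h2H, h2B⟩, rfl⟩
        have s1 := h1H.1 i j hi hj
        have s2 := h2H.1 i j hi hj
        beta_reduce; omega
      · intro i j hi hj
        obtain ⟨h1, ⟨h1H, h1B⟩, e1⟩ := Int.csSup_mem (hne i j) (hbdd i j hi (by omega))
        obtain ⟨h2, ⟨h2H, h2B⟩, e2⟩ :=
          Int.csSup_mem (hne i (j+1)) (hbdd i (j+1) hi (by omega))
        have l1 : h1 i (j+1) ≤ sSup (T i (j+1)) :=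
          le_csSup (hbdd i (j+1) hi (by omega)) ⟨h1, ⟨h1H, h1B⟩, rfl⟩
        have l2 : h2 i j ≤ sSup (T i j) :=
          le_csSup (hbdd i j hi (by omega)) ⟨h2, ⟨h2H, h2B⟩, rfl⟩
        have s1 := h1H.2 i j hi hj
        have s2 := h2H.2 i j hi hj
        beta_reduce; omega
    · -- hmax boundary
      intro i j hi hj hbnd
      obtain ⟨h1, ⟨h1H, h1B⟩, e1⟩ := Int.csSup_mem (hne i j) (hbdd i j hi hj)
      beta_reduce; rw [← e1]; exact h1B i j hi hj hbnd
    · -- extremality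
      intro h hH hB i j hi hj
      exact ⟨csInf_le (hbddb i j hi hj) ⟨h, ⟨hH, hB⟩, rfl⟩,
        le_csSup (hbdd i j hi hj) ⟨h, ⟨hH, hB⟩, rfl⟩⟩
end

section
/- Let a₁, a₂, b₁, b₂ > 0 and define θ* ∈ [0,π] as follows: θ* = 0 if |a₂ − b₂| > a₁ + b₁; θ* = π if |a₁ − b₁| > a₂ + b₂; and otherwise θ* = arccos( (a₂² + b₂² − a₁² − b₁²) / (2(a₁b₁ + a₂b₂)) ) — in the last case the argument of arccos lies in [−1,1], so θ* is well defined. Then ∫₀^{2π} ∫₀^{2π} ln | a₁ + b₁ e^{iθ} + (b₂ − a₂ e^{iθ}) e^{iφ} | dφ dθ = 2π ∫_{−θ*}^{θ*} ln | a₁ + b₁ e^{iθ} | dθ + 2π ∫_{−π+θ*}^{π−θ*} ln | b₂ + a₂ e^{iθ} | dθ. -/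
/-!
For fixed `θ` the inner integrand is `log ‖A + B e^{iφ}‖` with `A = a₁ + b₁e^{iθ}`,
`B = b₂ − a₂e^{iθ}`, and Jensen's formula gives `2π log (max ‖A‖ ‖B‖)` for every `θ`, including
`‖A‖ = ‖B‖`. Since `‖A‖² − ‖B‖² = 2(a₁b₁ + a₂b₂)(cos θ − k)`, `k` the argument of `arccos`, the
maximum is `‖A‖` on the arc `|θ| ≤ θ*` and `‖B‖` on the complementary arc, which the substitution
`θ = u + π` maps to `|u| ≤ π − θ*` while turning `B` into `b₂ + a₂e^{iu}`.
-/

open Real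

/-- The angle `θ*` of Appendix D: `θ* = 0` if `|a₂ − b₂| > a₁ + b₁`,
`θ* = π` if `|a₁ − b₁| > a₂ + b₂`, and otherwise
`θ* = arccos((a₂² + b₂² − a₁² − b₁²)/(2(a₁b₁ + a₂b₂)))`. -/
noncomputable def thetaStar (a₁ a₂ b₁ b₂ : ℝ) : ℝ :=
  if |a₂ - b₂| > a₁ + b₁ then 0
  else if |a₁ - b₁| > a₂ + b₂ then Real.pi
  else Real.arccos ((a₂ ^ 2 + b₂ ^ 2 - a₁ ^ 2 - b₁ ^ 2) / (2 * (a₁ * b₁ + a₂ * b₂)))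

namespace Real

theorem log_add_posLog_inv_mul {r x : ℝ} (hr : 0 < r) (hx : 0 ≤ x) :
    log r + posLog (r⁻¹ * x) = log (max x r) := by
  rcases le_or_gt x r with h | h
  · rw [max_eq_right h, (posLog_eq_zero_iff _).mpr, add_zero]
    rw [abs_of_nonneg (by positivity)]
    exact inv_mul_le_one_of_le₀ h hr.le
  · rw [max_eq_left h.le, posLog_eq_log, log_mul (inv_ne_zero hr.ne') (hr.trans h).ne', log_inv]
    · ring
    rw [abs_of_nonneg (by positivity)]
    exact (one_le_inv_mul₀ hr).mpr h.le

theorem le_cos_arccos {x : ℝ} (hx : x ≤ 1) : x ≤ cos (arccos x) := by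
  rcases le_or_gt (-1) x with h | h
  · rw [cos_arccos h hx]
  · rw [arccos_eq_pi.mpr h.le, cos_pi]
    exact h.le

theorem cos_arccos_le {x : ℝ} (hx : -1 ≤ x) : cos (arccos x) ≤ x := by
  rcases le_or_gt x 1 with h | h
  · rw [cos_arccos hx h]
  · rw [arccos_eq_zero.mpr h.le, cos_zero]
    exact h.le

theorem cos_le_cos_of_abs_le {θ s : ℝ} (h : |θ| ≤ s) (hs : s ≤ π) : cos s ≤ cos θ := by
  rw [← cos_abs θ]
  exact cos_le_cos_of_nonneg_of_le_pi (abs_nonneg θ) hs h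

end Real

theorem integral_log_norm_add_mul_exp (c d : ℂ) :
    ∫ φ in (0 : ℝ)..2 * π, log ‖c + d * Complex.exp (φ * Complex.I)‖
      = 2 * π * log (max ‖c‖ ‖d‖) := by
  rcases eq_or_ne d 0 with rfl | hd
  · simp
  -- rotating `d` onto the positive real axis turns the integrand into `log ‖z - a‖` on a circle
  set u : ℂ := d / ‖d‖
  have hd' : (‖d‖ : ℂ) ≠ 0 := by simpa using hd
  have hu : ‖u‖ = 1 := by simp [u, hd]
  have hrot : ∀ φ : ℝ, ‖c + d * Complex.exp (φ * Complex.I)‖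
      = ‖circleMap 0 ‖d‖ φ - (-(c / u))‖ := by
    intro φ
    have : c + d * Complex.exp (φ * Complex.I) = u * (circleMap 0 ‖d‖ φ - (-(c / u))) := by
      simp only [circleMap, u]
      field_simp
      ring
    rw [this, norm_mul, hu, one_mul]
  have havg := circleAverage_log_norm_sub_const_eq_log_radius_add_posLog
    (c := 0) (a := -(c / u)) (norm_ne_zero_iff.mpr hd)
  rw [circleAverage_def, smul_eq_mul] at havg
  simp only [← hrot] at havg
  rw [zero_sub, neg_neg, norm_div, hu, div_one] at havg
  rw [log_add_posLog_inv_mul (norm_pos_iff.mpr hd) (norm_nonneg c)] at havg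
  rw [← havg, ← mul_assoc, mul_inv_cancel₀ (by positivity), one_mul]

theorem norm_sq_ofReal_add_mul_exp (p q θ : ℝ) :
    ‖(p : ℂ) + q * Complex.exp (θ * Complex.I)‖ ^ 2 = p ^ 2 + q ^ 2 + 2 * p * q * cos θ := by
  rw [Complex.sq_norm, Complex.normSq_apply]
  simp only [Complex.add_re, Complex.add_im, Complex.mul_re, Complex.mul_im, Complex.ofReal_re,
    Complex.ofReal_im, Complex.exp_ofReal_mul_I_re, Complex.exp_ofReal_mul_I_im]
  nlinarith [sin_sq_add_cos_sq θ]

theorem periodic_comp_exp_mul_I {β : Type*} (F : ℂ → β) :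
    Function.Periodic (fun θ : ℝ => F (Complex.exp (θ * Complex.I))) (2 * π) := by
  intro θ
  simpa using congrArg F (Complex.exp_mul_I_periodic (θ : ℂ))

section ThetaStar

variable {a₁ a₂ b₁ b₂ : ℝ}

noncomputable def thetaStarArg (a₁ a₂ b₁ b₂ : ℝ) : ℝ :=
  (a₂ ^ 2 + b₂ ^ 2 - a₁ ^ 2 - b₁ ^ 2) / (2 * (a₁ * b₁ + a₂ * b₂))

theorem thetaStarArg_mem_Icc (hD : 0 < a₁ * b₁ + a₂ * b₂) (hA : ¬|a₂ - b₂| > a₁ + b₁)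
    (hB : ¬|a₁ - b₁| > a₂ + b₂) : thetaStarArg a₁ a₂ b₁ b₂ ∈ Set.Icc (-1) 1 := by
  rw [not_lt] at hA hB
  constructor
  · rw [thetaStarArg, le_div_iff₀ (by positivity)]
    nlinarith [sq_abs (a₁ - b₁), abs_nonneg (a₁ - b₁)]
  · rw [thetaStarArg, div_le_iff₀ (by positivity)]
    nlinarith [sq_abs (a₂ - b₂), abs_nonneg (a₂ - b₂)]

theorem thetaStar_eq_arccos (h1 : 0 < a₁) (h2 : 0 < a₂) (h3 : 0 < b₁) (h4 : 0 < b₂) :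
    thetaStar a₁ a₂ b₁ b₂ = arccos (thetaStarArg a₁ a₂ b₁ b₂) := by
  have hD : (0 : ℝ) < 2 * (a₁ * b₁ + a₂ * b₂) := by positivity
  unfold thetaStar thetaStarArg
  split_ifs with hA hB
  · rw [eq_comm, arccos_eq_zero, le_div_iff₀ hD]
    nlinarith [abs_nonneg (a₂ - b₂), sq_abs (a₂ - b₂)]
  · rw [eq_comm, arccos_eq_pi, div_le_iff₀ hD]
    nlinarith [abs_nonneg (a₁ - b₁), sq_abs (a₁ - b₁)]
  · rfl

theorem norm_sq_sub_norm_sq_eq (hD : a₁ * b₁ + a₂ * b₂ ≠ 0) (θ : ℝ) :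
    ‖(a₁ : ℂ) + b₁ * Complex.exp (θ * Complex.I)‖ ^ 2
        - ‖(b₂ : ℂ) - a₂ * Complex.exp (θ * Complex.I)‖ ^ 2
      = 2 * (a₁ * b₁ + a₂ * b₂) * (cos θ - thetaStarArg a₁ a₂ b₁ b₂) := by
  have hB : (b₂ : ℂ) - a₂ * Complex.exp (θ * Complex.I)
      = b₂ + ((-a₂ : ℝ) : ℂ) * Complex.exp (θ * Complex.I) := by
    push_cast
    ring
  rw [hB, norm_sq_ofReal_add_mul_exp, norm_sq_ofReal_add_mul_exp, thetaStarArg]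
  rw [mul_sub, mul_div_cancel₀ _ (mul_ne_zero two_ne_zero hD)]
  ring

theorem max_norm_eq_left (hD : 0 < a₁ * b₁ + a₂ * b₂) {θ : ℝ}
    (h : thetaStarArg a₁ a₂ b₁ b₂ ≤ cos θ) :
    max ‖(a₁ : ℂ) + b₁ * Complex.exp (θ * Complex.I)‖ ‖(b₂ : ℂ) - a₂ * Complex.exp (θ * Complex.I)‖
      = ‖(a₁ : ℂ) + b₁ * Complex.exp (θ * Complex.I)‖ := by
  refine max_eq_left ((pow_le_pow_iff_left₀ (norm_nonneg _) (norm_nonneg _) two_ne_zero).mp ?_)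
  nlinarith [norm_sq_sub_norm_sq_eq hD.ne' θ]

theorem max_norm_eq_right (hD : 0 < a₁ * b₁ + a₂ * b₂) {θ : ℝ}
    (h : cos θ ≤ thetaStarArg a₁ a₂ b₁ b₂) :
    max ‖(a₁ : ℂ) + b₁ * Complex.exp (θ * Complex.I)‖ ‖(b₂ : ℂ) - a₂ * Complex.exp (θ * Complex.I)‖
      = ‖(b₂ : ℂ) - a₂ * Complex.exp (θ * Complex.I)‖ := by
  refine max_eq_right ((pow_le_pow_iff_left₀ (norm_nonneg _) (norm_nonneg _) two_ne_zero).mp ?_)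
  nlinarith [norm_sq_sub_norm_sq_eq hD.ne' θ]

theorem max_norm_eq_of_abs_le_arccos (hD : 0 < a₁ * b₁ + a₂ * b₂) {θ : ℝ}
    (ht : 0 < arccos (thetaStarArg a₁ a₂ b₁ b₂)) (hθ : |θ| ≤ arccos (thetaStarArg a₁ a₂ b₁ b₂)) :
    max ‖(a₁ : ℂ) + b₁ * Complex.exp (θ * Complex.I)‖ ‖(b₂ : ℂ) - a₂ * Complex.exp (θ * Complex.I)‖
      = ‖(a₁ : ℂ) + b₁ * Complex.exp (θ * Complex.I)‖ :=
  max_norm_eq_left hD <| (le_cos_arccos (arccos_pos.mp ht).le).trans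
    (cos_le_cos_of_abs_le hθ (arccos_le_pi _))

theorem max_norm_add_pi_eq_of_abs_le (hD : 0 < a₁ * b₁ + a₂ * b₂) {u : ℝ}
    (ht : arccos (thetaStarArg a₁ a₂ b₁ b₂) < π)
    (hu : |u| ≤ π - arccos (thetaStarArg a₁ a₂ b₁ b₂)) :
    max ‖(a₁ : ℂ) + b₁ * Complex.exp ((u + π : ℝ) * Complex.I)‖
        ‖(b₂ : ℂ) - a₂ * Complex.exp ((u + π : ℝ) * Complex.I)‖
      = ‖(b₂ : ℂ) + a₂ * Complex.exp (u * Complex.I)‖ := by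
  have hcos : cos (u + π) ≤ thetaStarArg a₁ a₂ b₁ b₂ := by
    have := cos_le_cos_of_abs_le hu (by linarith [arccos_nonneg (thetaStarArg a₁ a₂ b₁ b₂)])
    rw [cos_pi_sub] at this
    linarith [cos_add_pi u, cos_arccos_le (arccos_lt_pi.mp ht).le]
  rw [max_norm_eq_right hD hcos, Complex.ofReal_add, add_mul, Complex.exp_add,
    Complex.exp_pi_mul_I]
  congr 1
  ring

theorem continuous_log_max_norm (h : a₁ * a₂ + b₁ * b₂ ≠ 0) :
    Continuous fun θ : ℝ => log (max ‖(a₁ : ℂ) + b₁ * Complex.exp (θ * Complex.I)‖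
      ‖(b₂ : ℂ) - a₂ * Complex.exp (θ * Complex.I)‖) := by
  refine Continuous.log (by fun_prop) fun θ => (lt_max_iff.mpr ?_).ne'
  by_contra! hzero
  simp only [norm_le_zero_iff] at hzero
  apply h
  exact_mod_cast calc ((a₁ * a₂ + b₁ * b₂ : ℝ) : ℂ)
      = a₂ * ((a₁ : ℂ) + b₁ * Complex.exp (θ * Complex.I))
        + b₁ * ((b₂ : ℂ) - a₂ * Complex.exp (θ * Complex.I)) := by push_cast; ring
    _ = 0 := by rw [hzero.1, hzero.2]; ring

theorem integral_log_max_norm (hD : 0 < a₁ * b₁ + a₂ * b₂)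
    (hne : a₁ * a₂ + b₁ * b₂ ≠ 0) :
    ∫ θ in (0 : ℝ)..2 * π, log (max ‖(a₁ : ℂ) + b₁ * Complex.exp (θ * Complex.I)‖
        ‖(b₂ : ℂ) - a₂ * Complex.exp (θ * Complex.I)‖)
      = (∫ θ in -arccos (thetaStarArg a₁ a₂ b₁ b₂)..arccos (thetaStarArg a₁ a₂ b₁ b₂),
          log ‖(a₁ : ℂ) + b₁ * Complex.exp (θ * Complex.I)‖)
        + ∫ u in -(π - arccos (thetaStarArg a₁ a₂ b₁ b₂))..π - arccos (thetaStarArg a₁ a₂ b₁ b₂),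
          log ‖(b₂ : ℂ) + a₂ * Complex.exp (u * Complex.I)‖ := by
  set t := arccos (thetaStarArg a₁ a₂ b₁ b₂)
  set g : ℝ → ℝ := fun θ => log (max ‖(a₁ : ℂ) + b₁ * Complex.exp (θ * Complex.I)‖
    ‖(b₂ : ℂ) - a₂ * Complex.exp (θ * Complex.I)‖)
  have hg : Continuous g := continuous_log_max_norm hne
  have ht0 : 0 ≤ t := arccos_nonneg _
  have htπ : t ≤ π := arccos_le_pi _
  have hleft : ∫ θ in -t..t, g θ
      = ∫ θ in -t..t, log ‖(a₁ : ℂ) + b₁ * Complex.exp (θ * Complex.I)‖ := by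
    refine intervalIntegral.integral_congr_ae (Filter.Eventually.of_forall fun θ hθ => ?_)
    -- `Ι (-t) t` is empty when `t = 0`, the case in which the maximum at `θ = 0` is the `B`-term.
    rw [Set.uIoc_of_le (by linarith)] at hθ
    exact congrArg log (max_norm_eq_of_abs_le_arccos hD (by linarith [hθ.1, hθ.2])
      (abs_le.mpr ⟨hθ.1.le, hθ.2⟩))
  have hright : ∫ u in -(π - t)..π - t, g (u + π)
      = ∫ u in -(π - t)..π - t, log ‖(b₂ : ℂ) + a₂ * Complex.exp (u * Complex.I)‖ := by
    refine intervalIntegral.integral_congr_ae (Filter.Eventually.of_forall fun u hu => ?_)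
    rw [Set.uIoc_of_le (by linarith)] at hu
    exact congrArg log (max_norm_add_pi_eq_of_abs_le hD (by linarith [hu.1, hu.2])
      (abs_le.mpr ⟨hu.1.le, hu.2⟩))
  calc ∫ θ in (0 : ℝ)..2 * π, g θ
      = ∫ θ in -t..-t + 2 * π, g θ := by
        simpa using (periodic_comp_exp_mul_I fun z => log (max ‖(a₁ : ℂ) + b₁ * z‖
          ‖(b₂ : ℂ) - a₂ * z‖)).intervalIntegral_add_eq 0 (-t)
    _ = (∫ θ in -t..t, g θ) + ∫ θ in t..2 * π - t, g θ := by
        rw [intervalIntegral.integral_add_adjacent_intervals (hg.intervalIntegrable _ _)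
          (hg.intervalIntegrable _ _)]
        ring_nf
    _ = (∫ θ in -t..t, g θ) + ∫ u in -(π - t)..π - t, g (u + π) := by
        rw [intervalIntegral.integral_comp_add_right]
        ring_nf
    _ = _ := by rw [hleft, hright]

end ThetaStar

/-- for positive `a₁, a₂, b₁, b₂`, in the third case of the
definition of `θ*` the argument of `arccos` lies in `[−1,1]` (so `θ*` is well
defined), and the double integral over `[0,2π]²` of
`ln |a₁ + b₁e^{iθ} + (b₂ − a₂e^{iθ})e^{iφ}|` equals
`2π ∫_{−θ*}^{θ*} ln|a₁ + b₁e^{iθ}| dθ + 2π ∫_{−π+θ*}^{π−θ*} ln|b₂ + a₂e^{iθ}| dθ`. -/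
theorem stmt_14 (a₁ a₂ b₁ b₂ : ℝ)
    (h1 : 0 < a₁) (h2 : 0 < a₂) (h3 : 0 < b₁) (h4 : 0 < b₂) :
    (¬(|a₂ - b₂| > a₁ + b₁) → ¬(|a₁ - b₁| > a₂ + b₂) →
      (a₂ ^ 2 + b₂ ^ 2 - a₁ ^ 2 - b₁ ^ 2) / (2 * (a₁ * b₁ + a₂ * b₂))
        ∈ Set.Icc (-1 : ℝ) 1) ∧
    (∫ θ in (0 : ℝ)..(2 * π), ∫ φ in (0 : ℝ)..(2 * π),
        Real.log (‖((a₁ : ℂ) + (b₁ : ℂ) * Complex.exp (θ * Complex.I)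
          + ((b₂ : ℂ) - (a₂ : ℂ) * Complex.exp (θ * Complex.I))
              * Complex.exp (φ * Complex.I))‖))
      = 2 * π * (∫ θ in (-(thetaStar a₁ a₂ b₁ b₂))..(thetaStar a₁ a₂ b₁ b₂),
          Real.log (‖((a₁ : ℂ) + (b₁ : ℂ) * Complex.exp (θ * Complex.I))‖))
        + 2 * π * (∫ θ in (-(π - thetaStar a₁ a₂ b₁ b₂))..(π - thetaStar a₁ a₂ b₁ b₂),
          Real.log (‖((b₂ : ℂ) + (a₂ : ℂ) * Complex.exp (θ * Complex.I))‖)) := by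
  have hD : 0 < a₁ * b₁ + a₂ * b₂ := by positivity
  refine ⟨thetaStarArg_mem_Icc hD, ?_⟩
  simp only [integral_log_norm_add_mul_exp, intervalIntegral.integral_const_mul,
    integral_log_max_norm hD (by positivity : a₁ * a₂ + b₁ * b₂ ≠ 0),
    thetaStar_eq_arccos h1 h2 h3 h4]
  ring
end

section
/- Let a, b > 0 and H, V, θ ∈ ℝ, and set z = e^{2H} e^{iθ} ∈ ℂ. (a) If b − a z ≠ 0, then b/a − (a² + b²)/(ab − a² z) = −(a + b z)/(b − a z). (b) The equation |a + b z| = e^{2V} |b − a z| holds if and only if cos θ = [ a² (e^{2H+2V} − e^{−2H−2V}) + b² (e^{−2H+2V} − e^{2H−2V}) ] / ( 2ab (e^{2V} + e^{−2V}) ). -/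
/-!
Part (a) is a field identity. For (b), with `P = e^{2H}` and `Q = e^{2V}` one has
`|a + bz|² = a² + b²P² + 2abP cos θ` and `|b − az|² = b² + a²P² − 2abP cos θ`, so squaring the
modulus equation makes it linear in `cos θ`; solving and dividing by `PQ` gives the stated formula.
-/

theorem div_sub_sq_add_sq_div_eq_neg_div {K : Type*} [Field K] {a b z : K} (ha : a ≠ 0)
    (hz : b - a * z ≠ 0) :
    b / a - (a ^ 2 + b ^ 2) / (a * b - a ^ 2 * z) = -((a + b * z) / (b - a * z)) := by
  rw [show a * b - a ^ 2 * z = a * (b - a * z) by ring]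
  field_simp
  ring

namespace Complex

theorem norm_ofReal_add_ofReal_mul_sq (a b : ℝ) (z : ℂ) :
    ‖(a : ℂ) + b * z‖ ^ 2 = a ^ 2 + b ^ 2 * ‖z‖ ^ 2 + 2 * a * b * z.re := by
  rw [Complex.sq_norm, normSq_add, normSq_ofReal, normSq_mul, normSq_ofReal, ← Complex.sq_norm]
  simp only [conj_ofReal, map_mul, re_ofReal_mul, conj_re]
  ring

end Complex

theorem add_eq_sq_mul_sub_iff_eq_div {a b t s c : ℝ} (ha : a ≠ 0) (hb : b ≠ 0) (ht : t ≠ 0)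
    (hs : s ≠ 0) :
    a ^ 2 + b ^ 2 * t ^ 2 + 2 * a * b * t * c = s ^ 2 * (b ^ 2 + a ^ 2 * t ^ 2 - 2 * a * b * t * c)
      ↔ c = (a ^ 2 * (t * s - (t * s)⁻¹) + b ^ 2 * (t⁻¹ * s - t * s⁻¹))
            / (2 * a * b * (s + s⁻¹)) := by
  have hs' : s + s⁻¹ ≠ 0 := by
    rw [← mul_ne_zero_iff_right hs, add_mul, inv_mul_cancel₀ hs]
    exact (add_pos (mul_self_pos.2 hs) one_pos).ne'
  rw [eq_div_iff (by simp [ha, hb, hs'])]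
  field_simp
  constructor <;> intro h <;> linear_combination h

/-- with `z = e^{2H} e^{iθ}`:
(a) if `b − az ≠ 0` then `b/a − (a² + b²)/(ab − a²z) = −(a + bz)/(b − az)`;
(b) `|a + bz| = e^{2V}|b − az|` iff
`cos θ = (a²(e^{2H+2V} − e^{−2H−2V}) + b²(e^{−2H+2V} − e^{2H−2V}))/(2ab(e^{2V} + e^{−2V}))`. -/
theorem stmt_17 (a b H V θ : ℝ) (ha : 0 < a) (hb : 0 < b) :
    let z : ℂ := ((Real.exp (2 * H) : ℝ) : ℂ) * Complex.exp (θ * Complex.I)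
    (((b : ℂ) - (a : ℂ) * z ≠ 0 →
        (b : ℂ) / (a : ℂ)
            - ((a ^ 2 + b ^ 2 : ℝ) : ℂ) / (((a * b : ℝ) : ℂ) - ((a ^ 2 : ℝ) : ℂ) * z)
          = -(((a : ℂ) + (b : ℂ) * z) / ((b : ℂ) - (a : ℂ) * z)))) ∧
    (‖(a : ℂ) + (b : ℂ) * z‖
        = Real.exp (2 * V) * ‖(b : ℂ) - (a : ℂ) * z‖
      ↔ Real.cos θ =
          (a ^ 2 * (Real.exp (2 * H + 2 * V) - Real.exp (-2 * H - 2 * V))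
            + b ^ 2 * (Real.exp (-2 * H + 2 * V) - Real.exp (2 * H - 2 * V)))
          / (2 * a * b * (Real.exp (2 * V) + Real.exp (-2 * V)))) := by
  intro z
  refine ⟨fun hz => by
    push_cast
    exact div_sub_sq_add_sq_div_eq_neg_div (by exact_mod_cast ha.ne') hz, ?_⟩
  have hz_norm : ‖z‖ = Real.exp (2 * H) := by
    rw [norm_mul, Complex.norm_exp_ofReal_mul_I, Complex.norm_of_nonneg (Real.exp_pos _).le,
      mul_one]
  have hz_re : z.re = Real.exp (2 * H) * Real.cos θ := by
    simp only [z, Complex.re_ofReal_mul, Complex.exp_ofReal_mul_I_re]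
  have hsub : (b : ℂ) - a * z = b + ((-a : ℝ) : ℂ) * z := by push_cast; ring
  rw [← sq_eq_sq₀ (norm_nonneg _) (by positivity), mul_pow, hsub,
    Complex.norm_ofReal_add_ofReal_mul_sq, Complex.norm_ofReal_add_ofReal_mul_sq, hz_norm, hz_re]
  simp only [neg_mul, Real.exp_neg, Real.exp_add, Real.exp_sub]
  convert add_eq_sq_mul_sub_iff_eq_div ha.ne' hb.ne' (Real.exp_pos (2 * H)).ne'
    (Real.exp_pos (2 * V)).ne' using 2 <;> ring
end
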